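/- arXiv:2311.02075 — 2 statements merged into one kernel-verified Lean document; each statement's English description precedes it below -/
import Mathlib

section
/- Let v₁, …, vₙ be 1-Lipschitz valuation functions and let v'_1, …, v'_{n+1} be the lifted valuations: v'_i(a,b) = (1/3)·v_i(min(2a,1), min(2b,1)) + (2/3)·φ(|[a,b] ∩ [1/2,1]|) for i ∈ {1,…,n}, and v'_{n+1}(a,b) = (2/3)·φ(|[a,b] ∩ [1/2,1]|), where φ(t) = 0 for t ≤ 1/3 and φ(t) = 6(t − 1/3) for 1/3 ≤ t ≤ 1/2. Let ε > 0. Then from every ε-envy-free connected allocation of [0,1] for the n+1 agents with valuations v'_1, …, v'_{n+1}, one can obtain, by keeping the same cuts and reassigning pieces among at most two agents, a 2ε-envy-free connected allocation for v'_1, …, v'_{n+1} in which agent n+1 receives the rightmost piece. -/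
open Set

/-- A valuation function on the cake `[0,1]`. -/
def IsValuation (v : ℝ → ℝ → ℝ) : Prop :=
  ContinuousOn (fun p : ℝ × ℝ => v p.1 p.2) (Icc 0 1 ×ˢ Icc 0 1) ∧
  (∀ a ∈ Icc (0:ℝ) 1, ∀ b ∈ Icc (0:ℝ) 1, v a b ∈ Icc (0:ℝ) 1) ∧
  (∀ a ∈ Icc (0:ℝ) 1, ∀ b ∈ Icc (0:ℝ) 1, b ≤ a → v a b = 0)

/-- `L`-Lipschitz continuity of a valuation on `[0,1]²`. -/
def LipschitzVal (L : ℝ) (v : ℝ → ℝ → ℝ) : Prop :=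
  ∀ a b a' b' : ℝ, a ∈ Icc (0:ℝ) 1 → b ∈ Icc (0:ℝ) 1 → a' ∈ Icc (0:ℝ) 1 → b' ∈ Icc (0:ℝ) 1 →
    |v a b - v a' b'| ≤ L * (|a - a'| + |b - b'|)

/-- `φ(t) = 0` for `t ≤ 1/3`, and `φ(t) = 6(t - 1/3)` otherwise. -/
noncomputable def phi (t : ℝ) : ℝ := if t ≤ 1 / 3 then 0 else 6 * (t - 1 / 3)

/-- The length of `[a,b] ∩ [1/2,1]`. -/
noncomputable def interLen (a b : ℝ) : ℝ := max 0 (min b 1 - max a (1 / 2))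

/-- The lifted valuation of one of the original `n` agents. -/
noncomputable def liftVal (v : ℝ → ℝ → ℝ) (a b : ℝ) : ℝ :=
  (1 / 3) * v (min (2 * a) 1) (min (2 * b) 1) + (2 / 3) * phi (interLen a b)

/-- The lifted valuation of the extra `(n+1)`-st agent. -/
noncomputable def liftLast (a b : ℝ) : ℝ := (2 / 3) * phi (interLen a b)

/-- The family of `n+1` lifted valuations. -/
noncomputable def liftFam (n : ℕ) (v : Fin n → ℝ → ℝ → ℝ) :
    Fin (n + 1) → ℝ → ℝ → ℝ :=
  fun i => if h : (i : ℕ) < n then liftVal (v ⟨i, h⟩) else liftLast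

/-- Cuts of a connected division of `[0,1]` into `n` pieces. -/
def AllocCuts (n : ℕ) (c : Fin (n + 1) → ℝ) : Prop :=
  c 0 = 0 ∧ c (Fin.last n) = 1 ∧ ∀ j : Fin n, c j.castSucc ≤ c j.succ

/-- The allocation given by cuts `c` and assignment `π` is `ε`-envy-free for `v`. -/
def EFwith (n : ℕ) (v : Fin n → ℝ → ℝ → ℝ) (c : Fin (n + 1) → ℝ)
    (π : Equiv.Perm (Fin n)) (ε : ℝ) : Prop :=
  ∀ i j : Fin n,
    v i (c j.castSucc) (c j.succ) - ε ≤ v i (c (π i).castSucc) (c (π i).succ)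

lemma phi_nonneg (t : ℝ) : 0 ≤ phi t := by
  unfold phi; split_ifs with h
  · exact le_refl 0
  · push_neg at h; linarith

lemma phi_le_one {t : ℝ} (h : t ≤ 1 / 2) : phi t ≤ 1 := by
  unfold phi; split_ifs with h' <;> linarith

lemma interLen_nonneg (a b : ℝ) : 0 ≤ interLen a b := le_max_left _ _

lemma interLen_le_half (a b : ℝ) : interLen a b ≤ 1 / 2 := by
  unfold interLen
  have h1 : min b 1 ≤ 1 := min_le_right _ _
  have h2 : (1:ℝ)/2 ≤ max a (1/2) := le_max_right _ _
  have : min b 1 - max a (1/2) ≤ 1/2 := by linarith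
  exact max_le (by norm_num) this

/-- from any `ε`-envy-free allocation for the lifted valuations one can
obtain, keeping the same cuts and reassigning pieces among at most two agents, a
`2ε`-envy-free allocation in which the extra agent receives the rightmost piece. -/
theorem lifted_alloc_reassign_last (n : ℕ) (v : Fin n → ℝ → ℝ → ℝ)
    (hval : ∀ i, IsValuation (v i)) (hlip : ∀ i, LipschitzVal 1 (v i))
    (ε : ℝ) (hε : 0 < ε)
    (c : Fin (n + 2) → ℝ) (hc : AllocCuts (n + 1) c)
    (π : Equiv.Perm (Fin (n + 1)))
    (hEF : EFwith (n + 1) (liftFam n v) c π ε) :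
    ∃ π' : Equiv.Perm (Fin (n + 1)),
      π' (Fin.last n) = Fin.last n ∧
      (Finset.univ.filter (fun i => π' i ≠ π i)).card ≤ 2 ∧
      EFwith (n + 1) (liftFam n v) c π' (2 * ε) := by
  obtain ⟨hc0, hc1, hcm⟩ := hc
  have hmono : Monotone c := Fin.monotone_iff_le_succ.mpr hcm
  have hcmem : ∀ j, c j ∈ Icc (0:ℝ) 1 := by
    intro j
    constructor
    · rw [← hc0]; exact hmono (Fin.zero_le _)
    · rw [← hc1]; exact hmono (Fin.le_last _)
  -- valuations are in [0,1] at cut points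
  have hv01 : ∀ (i : Fin n) (x y : ℝ), x ∈ Icc (0:ℝ) 1 → y ∈ Icc (0:ℝ) 1 →
      v i (min (2*x) 1) (min (2*y) 1) ∈ Icc (0:ℝ) 1 := by
    intro i x y hx hy
    exact (hval i).2.1 _ ⟨le_min (by linarith [hx.1]) one_pos.le, min_le_right _ _⟩
      _ ⟨le_min (by linarith [hy.1]) one_pos.le, min_le_right _ _⟩
  have hfam01 : ∀ (i : Fin (n+1)) (x y : ℝ), x ∈ Icc (0:ℝ) 1 → y ∈ Icc (0:ℝ) 1 →
      liftFam n v i x y ∈ Icc (0:ℝ) 1 := by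
    intro i x y hx hy
    have hp0 := phi_nonneg (interLen x y)
    have hp1 := phi_le_one (interLen_le_half x y)
    unfold liftFam
    split_ifs with h
    · have := hv01 ⟨i, h⟩ x y hx hy
      unfold liftVal
      constructor <;> [nlinarith [this.1]; nlinarith [this.2]]
    · unfold liftLast
      constructor <;> nlinarith
  have hv0 : ∀ (i : Fin n) (x y : ℝ), x ∈ Icc (0:ℝ) 1 → y ∈ Icc (0:ℝ) 1 →
      0 ≤ v i (min (2*x) 1) (min (2*y) 1) := fun i x y hx hy => (hv01 i x y hx hy).1
  have hfamlast : liftFam n v (Fin.last n) = liftLast := dif_neg (by simp)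
  by_cases hfix : π (Fin.last n) = Fin.last n
  · exact ⟨π, hfix, by simp, fun i j => by linarith [hEF i j]⟩
  · set i₀ := π.symm (Fin.last n) with hi₀def
    have hπi₀ : π i₀ = Fin.last n := π.apply_symm_apply _
    have hi₀ne : i₀ ≠ Fin.last n := fun h => hfix (h ▸ hπi₀)
    have hi₀lt : (i₀ : ℕ) < n := Fin.val_lt_last hi₀ne
    set k := π (Fin.last n) with hkdef
    have hkne : k ≠ Fin.last n := hfix
    refine ⟨π * Equiv.swap (Fin.last n) i₀, ?_, ?_, ?_⟩
    · simp [Equiv.swap_apply_left, hπi₀]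
    · have hsub : (Finset.univ.filter
          (fun i => (π * Equiv.swap (Fin.last n) i₀) i ≠ π i)) ⊆ {Fin.last n, i₀} := by
        intro x hx
        simp only [Finset.mem_filter, Finset.mem_univ, true_and] at hx
        by_contra hmem
        simp only [Finset.mem_insert, Finset.mem_singleton, not_or] at hmem
        exact hx (by simp [Equiv.swap_apply_of_ne_of_ne hmem.1 hmem.2])
      calc _ ≤ ({Fin.last n, i₀} : Finset (Fin (n+1))).card := Finset.card_le_card hsub
        _ ≤ 2 := (Finset.card_insert_le _ _).trans (by simp)
    · -- envy-freeness
      intro i j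
      -- the value of each piece for each agent is in [0,1]
      have hpc : ∀ (i : Fin (n+1)) (j : Fin (n+1)),
          liftFam n v i (c j.castSucc) (c j.succ) ∈ Icc (0:ℝ) 1 :=
        fun i j => hfam01 i _ _ (hcmem _) (hcmem _)
      rcases le_or_gt (1/2 : ℝ) ε with hbig | hsmall
      · have h1 := hpc i j
        have h2 := hpc i ((π * Equiv.swap (Fin.last n) i₀) i)
        linarith [h1.2, h2.1]
      -- main case: ε < 1/2
      -- notation for the relevant cut points
      have hksucc : c k.succ ≤ c (Fin.last n).castSucc := by
        apply hmono
        rw [Fin.le_def]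
        simpa [Fin.val_succ] using Fin.val_lt_last hkne
      have hRsucc : c (Fin.last n).succ = 1 := by rw [Fin.succ_last]; exact hc1
      -- Step A : liftLast on piece k is at most ε
      have hA : liftLast (c k.castSucc) (c k.succ) ≤ ε := by
        unfold liftLast
        by_cases ht : interLen (c k.castSucc) (c k.succ) ≤ 1/3
        · rw [phi, if_pos ht]; linarith
        · push_neg at ht
          have hgt : 1/3 < min (c k.succ) 1 - max (c k.castSucc) (1/2) := by
            rcases max_cases 0 (min (c k.succ) 1 - max (c k.castSucc) (1/2)) with ⟨h1, h2⟩ | ⟨h1, h2⟩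
            · unfold interLen at ht; rw [h1] at ht; norm_num at ht
            · unfold interLen at ht; rwa [h1] at ht
          have hb : 5/6 < c k.succ := by
            have h1 : min (c k.succ) 1 ≤ c k.succ := min_le_left _ _
            have h2 : (1:ℝ)/2 ≤ max (c k.castSucc) (1/2) := le_max_right _ _
            linarith
          have hcR : 5/6 < c (Fin.last n).castSucc := lt_of_lt_of_le hb hksucc
          have hEFi₀ := hEF i₀ k
          rw [hπi₀, hRsucc] at hEFi₀
          have hfami₀ : liftFam n v i₀ = liftVal (v ⟨i₀, hi₀lt⟩) := dif_pos hi₀lt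
          rw [hfami₀] at hEFi₀
          -- compute liftVal at the rightmost piece: it is 0
          have hmin1 : min (2 * c (Fin.last n).castSucc) 1 = 1 :=
            min_eq_right (by linarith)
          have hmin2 : min (2 * (1:ℝ)) 1 = 1 := min_eq_right (by norm_num)
          have hvzero : v ⟨i₀, hi₀lt⟩ 1 1 = 0 :=
            (hval _).2.2 1 ⟨zero_le_one, le_refl 1⟩ 1 ⟨zero_le_one, le_refl 1⟩ (le_refl 1)
          have hinter : interLen (c (Fin.last n).castSucc) 1 ≤ 1/3 := by
            unfold interLen
            have : min (1:ℝ) 1 - max (c (Fin.last n).castSucc) (1/2) ≤ 1/3 := by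
              have := le_max_left (c (Fin.last n).castSucc) (1/2)
              simp only [min_self]
              linarith
            exact max_le (by norm_num) this
          have hRzero : liftVal (v ⟨i₀, hi₀lt⟩) (c (Fin.last n).castSucc) 1 = 0 := by
            unfold liftVal
            rw [hmin1, hmin2, hvzero, phi, if_pos hinter]
            ring
          rw [hRzero] at hEFi₀
          have hvk := hv0 ⟨i₀, hi₀lt⟩ (c k.castSucc) (c k.succ) (hcmem _) (hcmem _)
          unfold liftVal at hEFi₀
          linarith
      -- Step B : liftVal of i₀ at the rightmost piece ≤ liftVal of i₀ at piece k + ε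
      have hEFlast := hEF (Fin.last n) (Fin.last n)
      rw [hfamlast, ← hkdef, hRsucc] at hEFlast
      have hBmain : ∀ i' : Fin n,
          liftVal (v i') (c (Fin.last n).castSucc) 1 ≤
            liftVal (v i') (c k.castSucc) (c k.succ) + ε := by
        intro i'
        rcases le_or_gt (1/2 : ℝ) (c (Fin.last n).castSucc) with hcR | hcR
        · have hmin1 : min (2 * c (Fin.last n).castSucc) 1 = 1 :=
            min_eq_right (by linarith)
          have hmin2 : min (2 * (1:ℝ)) 1 = 1 := min_eq_right (by norm_num)
          have hvzero : v i' 1 1 = 0 :=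
            (hval _).2.2 1 ⟨zero_le_one, le_refl 1⟩ 1 ⟨zero_le_one, le_refl 1⟩ (le_refl 1)
          have hvk := hv0 i' (c k.castSucc) (c k.succ) (hcmem _) (hcmem _)
          unfold liftVal
          rw [hmin1, hmin2, hvzero]
          unfold liftLast at hEFlast
          linarith
        · -- cR < 1/2 : contradiction
          exfalso
          have hil : interLen (c (Fin.last n).castSucc) 1 = 1/2 := by
            unfold interLen
            rw [min_self, max_eq_right hcR.le, max_eq_right (by norm_num : (0:ℝ) ≤ 1 - 1/2)]
            norm_num
          have hphi : phi (interLen (c (Fin.last n).castSucc) 1) = 1 := by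
            rw [hil, phi, if_neg (by norm_num)]; norm_num
          unfold liftLast at hEFlast
          rw [hphi] at hEFlast
          -- so phi at piece k is ≥ 1 - (3/2)ε > 0, hence interLen > 1/3, hence c k.succ > 5/6
          have hphik : 1 - (3/2) * ε ≤ phi (interLen (c k.castSucc) (c k.succ)) := by
            linarith
          have htk : 1/3 < interLen (c k.castSucc) (c k.succ) := by
            by_contra h
            push_neg at h
            rw [phi, if_pos h] at hphik
            linarith
          have hgt : 1/3 < min (c k.succ) 1 - max (c k.castSucc) (1/2) := by
            rcases max_cases 0 (min (c k.succ) 1 - max (c k.castSucc) (1/2)) with ⟨h1, h2⟩ | ⟨h1, h2⟩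
            · unfold interLen at htk; rw [h1] at htk; norm_num at htk
            · unfold interLen at htk; rwa [h1] at htk
          have hb : 5/6 < c k.succ := by
            have h1 : min (c k.succ) 1 ≤ c k.succ := min_le_left _ _
            have h2 : (1:ℝ)/2 ≤ max (c k.castSucc) (1/2) := le_max_right _ _
            linarith
          linarith
      -- now the three cases for agent i
      by_cases hil : i = Fin.last n
      · subst hil
        have hπ' : (π * Equiv.swap (Fin.last n) i₀) (Fin.last n) = Fin.last n := by
          simp [Equiv.swap_apply_left, hπi₀]
        rw [hπ', hfamlast, hRsucc]
        have hEFl := hEF (Fin.last n) j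
        rw [hfamlast, ← hkdef] at hEFl
        have h0 : 0 ≤ liftLast (c (Fin.last n).castSucc) 1 := by
          unfold liftLast
          have := phi_nonneg (interLen (c (Fin.last n).castSucc) 1)
          linarith
        linarith
      · by_cases hii₀ : i = i₀
        · subst hii₀
          have hπ' : (π * Equiv.swap (Fin.last n) i₀) i₀ = k := by
            rcases eq_or_ne i₀ (Fin.last n) with h | h
            · exact absurd h hi₀ne
            · simp [Equiv.swap_apply_right, hkdef]
          rw [hπ']
          have hfami₀ : liftFam n v i₀ = liftVal (v ⟨i₀, hi₀lt⟩) := dif_pos hi₀lt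
          rw [hfami₀]
          have hEFi := hEF i₀ j
          rw [hfami₀, hπi₀, hRsucc] at hEFi
          have := hBmain ⟨i₀, hi₀lt⟩
          linarith
        · have hπ' : (π * Equiv.swap (Fin.last n) i₀) i = π i := by
            simp [Equiv.swap_apply_of_ne_of_ne hil hii₀]
          rw [hπ']
          linarith [hEF i j]
end

section
/- Let m ∈ ℕ with m ≥ 1, let f : [0,1] → [0,∞) be integrable with ∫₀¹ f(x) dx = 1, and suppose 0 = x₀ < x₁ < ⋯ < x_m = 1 are strictly increasing m-quantiles of f, i.e., ∫_{x_{j−1}}^{x_j} f(x) dx = 1/m for every j ∈ {1,…,m}. Define the evened-out density f̃(x) := (1/m) Σ_{j=1}^{m} 𝟙_{[x_{j−1},x_j]}(x) / (x_j − x_{j−1}) and the valuation ṽ(a,b) := ∫_a^b f̃(x) dx. Then for all 0 ≤ a ≤ b ≤ 1: (i) ṽ(a,b) ≥ (b − a)/m (ṽ is (1/m)-strongly-hungry), and (ii) |ṽ(a,b) − ∫_a^b f(x) dx| ≤ 2/m (ṽ is a 2/m-approximation of the valuation v(a,b) = ∫_a^b f). -/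
/-!
Let `F` and `G` be the primitives of `f` and of the evened-out density `f̃` from `0`.
Both are nondecreasing on `[0,1]`, and `f̃` has the same `m`-quantiles as `f`, so
`F (x_k) = G (x_k) = k / m`. On each cell `[x_k, x_{k+1}]` both primitives therefore stay in
`[k/m, (k+1)/m]`, whence `|G - F| ≤ 1/m` and `|ṽ(a,b) - v(a,b)| ≤ 2/m`. Hungriness holds
pointwise: each cell has length at most `1`, so `f̃ ≥ 1/m` on `[0,1]`.
-/

open Set MeasureTheory intervalIntegral

theorem exists_mem_Icc_succ_of_mem_Icc {xs : ℕ → ℝ} {m : ℕ} (hm : 0 < m) {x : ℝ}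
    (hx : x ∈ Icc (xs 0) (xs m)) : ∃ k < m, x ∈ Icc (xs k) (xs (k + 1)) := by
  induction m with
  | zero => omega
  | succ n ih =>
    rcases Nat.eq_zero_or_pos n with rfl | hn
    · exact ⟨0, Nat.one_pos, hx⟩
    · rcases le_total (xs n) x with h | h
      · exact ⟨n, n.lt_succ_self, h, hx.2⟩
      · obtain ⟨k, hk, hxk⟩ := ih hn ⟨hx.1, h⟩
        exact ⟨k, hk.trans n.lt_succ_self, hxk⟩

theorem mem_Icc_of_monotoneOn_Iic {xs : ℕ → ℝ} {m i : ℕ} (hxs : MonotoneOn xs (Iic m))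
    (hi : i ≤ m) : xs i ∈ Icc (xs 0) (xs m) :=
  ⟨hxs (Nat.zero_le m) hi (Nat.zero_le i), hxs hi (mem_Iic.2 le_rfl) hi⟩

theorem abs_sub_le_of_monotoneOn_of_eq_on_partition {F G : ℝ → ℝ} {xs : ℕ → ℝ} {m : ℕ}
    {δ : ℝ} (hm : 0 < m) (hxs : MonotoneOn xs (Iic m))
    (hF : MonotoneOn F (Icc (xs 0) (xs m))) (hG : MonotoneOn G (Icc (xs 0) (xs m)))
    (heq : ∀ k ≤ m, F (xs k) = G (xs k)) (hstep : ∀ k < m, F (xs (k + 1)) - F (xs k) ≤ δ)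
    {x : ℝ} (hx : x ∈ Icc (xs 0) (xs m)) : |G x - F x| ≤ δ := by
  obtain ⟨k, hk, hxk⟩ := exists_mem_Icc_succ_of_mem_Icc hm hx
  have hk₀ := mem_Icc_of_monotoneOn_Iic hxs hk.le
  have hk₁ := mem_Icc_of_monotoneOn_Iic hxs (show k + 1 ≤ m from hk)
  rw [abs_le]
  constructor <;> linarith [hF hk₀ hx hxk.1, hF hx hk₁ hxk.2, hG hk₀ hx hxk.1,
    hG hx hk₁ hxk.2, heq k hk.le, heq (k + 1) hk, hstep k hk]

theorem monotoneOn_integral_of_nonneg {f : ℝ → ℝ} {a b : ℝ}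
    (hf : IntervalIntegrable f volume a b) (hnn : ∀ t ∈ Icc a b, 0 ≤ f t) :
    MonotoneOn (fun x => ∫ t in a..x, f t) (Icc a b) := by
  intro x hx y hy hxy
  refine integral_mono_interval le_rfl hx.1 hxy ?_ (hf.mono_set ?_)
  · filter_upwards [ae_restrict_mem measurableSet_Ioc] with t ht
    exact hnn t ⟨ht.1.le, ht.2.trans hy.2⟩
  · rw [uIcc_of_le hy.1, uIcc_of_le (hy.1.trans hy.2)]
    exact Icc_subset_Icc_right hy.2

theorem integral_eq_mul_of_integral_cell_eq {f : ℝ → ℝ} {xs : ℕ → ℝ} {m : ℕ} {c : ℝ}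
    (hint : ∀ j < m, IntervalIntegrable f volume (xs j) (xs (j + 1)))
    (hcell : ∀ j < m, ∫ t in xs j..xs (j + 1), f t = c) {k : ℕ} (hk : k ≤ m) :
    ∫ t in xs 0..xs k, f t = k * c := by
  rw [← sum_integral_adjacent_intervals fun j hj => hint j (hj.trans_le hk),
    Finset.sum_congr rfl fun j hj => hcell j ((Finset.mem_range.1 hj).trans_le hk)]
  simp

theorem abs_integral_sub_le_of_integral_cell_eq {f g : ℝ → ℝ} {xs : ℕ → ℝ} {m : ℕ}
    {c : ℝ} (hm : 0 < m) (hxs : MonotoneOn xs (Iic m))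
    (hf : IntervalIntegrable f volume (xs 0) (xs m))
    (hg : IntervalIntegrable g volume (xs 0) (xs m))
    (hf0 : ∀ t ∈ Icc (xs 0) (xs m), 0 ≤ f t) (hg0 : ∀ t ∈ Icc (xs 0) (xs m), 0 ≤ g t)
    (hfc : ∀ j < m, ∫ t in xs j..xs (j + 1), f t = c)
    (hgc : ∀ j < m, ∫ t in xs j..xs (j + 1), g t = c)
    {x : ℝ} (hx : x ∈ Icc (xs 0) (xs m)) :
    |(∫ t in xs 0..x, g t) - ∫ t in xs 0..x, f t| ≤ c := by
  have hcell : ∀ φ : ℝ → ℝ, IntervalIntegrable φ volume (xs 0) (xs m) →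
      ∀ j < m, IntervalIntegrable φ volume (xs j) (xs (j + 1)) := fun φ hφ j hj =>
    hφ.mono_set <| uIcc_subset_uIcc (Icc_subset_uIcc (mem_Icc_of_monotoneOn_Iic hxs hj.le))
      (Icc_subset_uIcc (mem_Icc_of_monotoneOn_Iic hxs (show j + 1 ≤ m from hj)))
  have hFq := fun k (hk : k ≤ m) => integral_eq_mul_of_integral_cell_eq (hcell f hf) hfc hk
  have hGq := fun k (hk : k ≤ m) => integral_eq_mul_of_integral_cell_eq (hcell g hg) hgc hk
  refine abs_sub_le_of_monotoneOn_of_eq_on_partition hm hxs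
    (monotoneOn_integral_of_nonneg hf hf0) (monotoneOn_integral_of_nonneg hg hg0)
    (fun k hk => (hFq k hk).trans (hGq k hk).symm) (fun k hk => ?_) hx
  simp only [hFq k hk.le, hFq (k + 1) hk]
  push_cast
  linarith

theorem abs_integral_sub_integral_le_two_mul {f g : ℝ → ℝ} {c d δ : ℝ}
    (hf : IntervalIntegrable f volume c d) (hg : IntervalIntegrable g volume c d)
    (hprim : ∀ x ∈ Icc c d, |(∫ t in c..x, g t) - ∫ t in c..x, f t| ≤ δ)
    {a b : ℝ} (ha : a ∈ Icc c d) (hb : b ∈ Icc c d) :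
    |(∫ t in a..b, g t) - ∫ t in a..b, f t| ≤ 2 * δ := by
  have hsub : ∀ φ : ℝ → ℝ, IntervalIntegrable φ volume c d →
      ∫ t in a..b, φ t = (∫ t in c..b, φ t) - ∫ t in c..a, φ t := fun φ hφ =>
    (integral_interval_sub_left (hφ.mono_set (uIcc_subset_uIcc_left (Icc_subset_uIcc hb)))
      (hφ.mono_set (uIcc_subset_uIcc_left (Icc_subset_uIcc ha)))).symm
  rw [hsub f hf, hsub g hg]
  calc _ = |((∫ t in c..b, g t) - ∫ t in c..b, f t)
          - ((∫ t in c..a, g t) - ∫ t in c..a, f t)| := by ring_nf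
    _ ≤ δ + δ := (abs_sub _ _).trans (add_le_add (hprim b hb) (hprim a ha))
    _ = 2 * δ := by ring

theorem intervalIntegrable_indicator_Icc_const (a b c d k : ℝ) :
    IntervalIntegrable ((Icc c d).indicator fun _ => k) volume a b :=
  ((integrable_indicator_iff measurableSet_Icc).2
    (integrableOn_const measure_Icc_lt_top.ne)).intervalIntegrable

theorem integral_indicator_Icc_const {a b : ℝ} (c d k : ℝ) (hab : a ≤ b) :
    ∫ t in a..b, (Icc c d).indicator (fun _ => k) t = k * max (min b d - max a c) 0 := by
  have hae : (Icc c d).indicator (fun _ => k) =ᵐ[volume] (Ioc c d).indicator fun _ => k :=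
    indicator_ae_eq_of_ae_eq_set Ioc_ae_eq_Icc.symm
  rw [integral_of_le hab, integral_congr_ae (ae_restrict_of_ae hae),
    setIntegral_indicator measurableSet_Ioc, Ioc_inter_Ioc, setIntegral_const,
    Real.volume_real_Ioc, smul_eq_mul, mul_comm]

noncomputable def evenedOutDensity (m : ℕ) (xs : ℕ → ℝ) (t : ℝ) : ℝ :=
  (1 / (m : ℝ)) * ∑ j ∈ Finset.range m,
    (Icc (xs j) (xs (j + 1))).indicator (fun _ => 1 / (xs (j + 1) - xs j)) t

section EvenedOutDensity

variable {m : ℕ} {xs : ℕ → ℝ}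

theorem intervalIntegrable_evenedOutDensity (a b : ℝ) :
    IntervalIntegrable (evenedOutDensity m xs) volume a b := by
  have := (IntervalIntegrable.sum (Finset.range m)
    (f := fun j => (Icc (xs j) (xs (j + 1))).indicator fun _ => 1 / (xs (j + 1) - xs j))
    fun j _ => intervalIntegrable_indicator_Icc_const a b _ _ _).const_mul (1 / (m : ℝ))
  simp only [Finset.sum_apply] at this
  exact this

theorem evenedOutDensity_nonneg (hxs : ∀ j < m, xs j < xs (j + 1)) (t : ℝ) :
    0 ≤ evenedOutDensity m xs t := by
  refine mul_nonneg (by positivity) (Finset.sum_nonneg fun j hj => indicator_nonneg ?_ t)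
  exact fun _ _ => (one_div_pos.2 (sub_pos.2 (hxs j (Finset.mem_range.1 hj)))).le

theorem integral_evenedOutDensity_cell (hxs : ∀ j < m, xs j < xs (j + 1)) {i : ℕ} (hi : i < m) :
    ∫ t in xs i..xs (i + 1), evenedOutDensity m xs t = 1 / m := by
  have hmono := (strictMonoOn_Iic_of_lt_succ (n := m) fun j hj => hxs j hj).monotoneOn
  have hoverlap : ∀ j < m, 1 / (xs (j + 1) - xs j) *
      max (min (xs (i + 1)) (xs (j + 1)) - max (xs i) (xs j)) 0 = if i = j then 1 else 0 := by
    intro j hj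
    rcases lt_trichotomy j i with hji | rfl | hij
    · have : xs (j + 1) ≤ xs i := hmono (show j + 1 ≤ m by omega) hi.le hji
      have : min (xs (i + 1)) (xs (j + 1)) - max (xs i) (xs j) ≤ 0 := by
        linarith [min_le_right (xs (i + 1)) (xs (j + 1)), le_max_left (xs i) (xs j)]
      rw [if_neg hji.ne', max_eq_right this, mul_zero]
    · have hlen := sub_pos.2 (hxs j hj)
      rw [if_pos rfl, min_self, max_self, max_eq_left hlen.le, one_div_mul_cancel hlen.ne']
    · have : xs (i + 1) ≤ xs j := hmono (show i + 1 ≤ m by omega) hj.le hij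
      have : min (xs (i + 1)) (xs (j + 1)) - max (xs i) (xs j) ≤ 0 := by
        linarith [min_le_left (xs (i + 1)) (xs (j + 1)), le_max_right (xs i) (xs j)]
      rw [if_neg hij.ne, max_eq_right this, mul_zero]
  simp only [evenedOutDensity]
  rw [intervalIntegral.integral_const_mul,
    integral_finsetSum fun j _ => intervalIntegrable_indicator_Icc_const _ _ _ _ _,
    Finset.sum_congr rfl fun j hj => (integral_indicator_Icc_const _ _ _ (hxs i hi).le).trans
      (hoverlap j (Finset.mem_range.1 hj)), Finset.sum_ite_eq, if_pos (Finset.mem_range.2 hi),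
    mul_one]

theorem one_div_le_evenedOutDensity (hm : 0 < m) (hxs : ∀ j < m, xs j < xs (j + 1))
    (hlen : xs m - xs 0 ≤ 1) {t : ℝ} (ht : t ∈ Icc (xs 0) (xs m)) :
    1 / m ≤ evenedOutDensity m xs t := by
  have hmono := (strictMonoOn_Iic_of_lt_succ (n := m) fun j hj => hxs j hj).monotoneOn
  obtain ⟨k, hk, htk⟩ := exists_mem_Icc_succ_of_mem_Icc hm ht
  have hcell : 0 < xs (k + 1) - xs k ∧ xs (k + 1) - xs k ≤ 1 := by
    have := (mem_Icc_of_monotoneOn_Iic hmono hk.le).1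
    have := (mem_Icc_of_monotoneOn_Iic hmono (show k + 1 ≤ m from hk)).2
    exact ⟨sub_pos.2 (hxs k hk), by linarith⟩
  have hterm : 1 ≤ ∑ j ∈ Finset.range m,
      (Icc (xs j) (xs (j + 1))).indicator (fun _ => 1 / (xs (j + 1) - xs j)) t := by
    refine le_trans ?_ (Finset.single_le_sum (f := fun j =>
      (Icc (xs j) (xs (j + 1))).indicator (fun _ => 1 / (xs (j + 1) - xs j)) t)
      (fun j hj => indicator_nonneg (fun _ _ =>
        (one_div_pos.2 (sub_pos.2 (hxs j (Finset.mem_range.1 hj)))).le) t)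
      (Finset.mem_range.2 hk))
    rw [indicator_of_mem htk, le_div_iff₀ hcell.1, one_mul]
    exact hcell.2
  exact (mul_one _).symm.trans_le (mul_le_mul_of_nonneg_left hterm (by positivity))

end EvenedOutDensity

theorem evenedOut_density_props_general (m : ℕ) (hm : 1 ≤ m) (f : ℝ → ℝ)
    (hf_int : IntervalIntegrable f volume 0 1)
    (hf_nonneg : ∀ t ∈ Icc (0:ℝ) 1, 0 ≤ f t)
    (xs : ℕ → ℝ) (hx0 : xs 0 = 0) (hxm : xs m = 1)
    (hmono : ∀ j < m, xs j < xs (j + 1))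
    (hquant : ∀ j < m, ∫ t in (xs j)..(xs (j + 1)), f t = 1 / (m : ℝ)) :
    ∀ a b : ℝ, 0 ≤ a → a ≤ b → b ≤ 1 →
      ((b - a) / (m : ℝ) ≤
        ∫ t in a..b, (1 / (m : ℝ)) * ∑ j ∈ Finset.range m,
          Set.indicator (Icc (xs j) (xs (j + 1)))
            (fun _ => 1 / (xs (j + 1) - xs j)) t) ∧
      |(∫ t in a..b, (1 / (m : ℝ)) * ∑ j ∈ Finset.range m,
          Set.indicator (Icc (xs j) (xs (j + 1)))
            (fun _ => 1 / (xs (j + 1) - xs j)) t)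
        - ∫ t in a..b, f t| ≤ 2 / (m : ℝ) := by
  intro a b ha hab hb
  have hxs := (strictMonoOn_Iic_of_lt_succ (n := m) fun j hj => hmono j hj).monotoneOn
  have hrange : Icc (xs 0) (xs m) = Icc 0 1 := by rw [hx0, hxm]
  have hg := intervalIntegrable_evenedOutDensity (m := m) (xs := xs) 0 1
  have hprim : ∀ x ∈ Icc (0:ℝ) 1,
      |(∫ t in (0:ℝ)..x, evenedOutDensity m xs t) - ∫ t in (0:ℝ)..x, f t| ≤ 1 / m := by
    intro x hx
    have := abs_integral_sub_le_of_integral_cell_eq hm hxs (by rwa [hx0, hxm])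
      (intervalIntegrable_evenedOutDensity _ _)
      (hrange ▸ hf_nonneg) (fun t _ => evenedOutDensity_nonneg hmono t) hquant
      (fun _ hj => integral_evenedOutDensity_cell hmono hj) (hrange ▸ hx)
    rwa [hx0] at this
  refine ⟨?_, ?_⟩
  · calc (b - a) / m = ∫ _ in a..b, 1 / (m : ℝ) := by simp [div_eq_inv_mul, mul_comm]
      _ ≤ ∫ t in a..b, evenedOutDensity m xs t :=
        integral_mono_on hab intervalIntegrable_const (intervalIntegrable_evenedOutDensity a b)
          fun t ht => one_div_le_evenedOutDensity hm hmono (by linarith) (hrange ▸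
            ⟨ha.trans ht.1, ht.2.trans hb⟩)
  · calc _ ≤ 2 * (1 / (m : ℝ)) := abs_integral_sub_integral_le_two_mul hf_int hg hprim
          ⟨ha, hab.trans hb⟩ ⟨ha.trans hab, hb⟩
      _ = 2 / m := by ring

/-- evening out an integrable density between its (strictly increasing)
`m`-quantiles yields a `(1/m)`-strongly-hungry valuation that is a `2/m`-approximation
of the original valuation. -/
theorem evenedOut_density_props (m : ℕ) (hm : 1 ≤ m) (f : ℝ → ℝ)
    (hf_int : IntervalIntegrable f volume 0 1)
    (hf_nonneg : ∀ t ∈ Icc (0:ℝ) 1, 0 ≤ f t)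
    (hf_total : ∫ t in (0:ℝ)..1, f t = 1)
    (xs : ℕ → ℝ) (hx0 : xs 0 = 0) (hxm : xs m = 1)
    (hmono : ∀ j < m, xs j < xs (j + 1))
    (hquant : ∀ j < m, ∫ t in (xs j)..(xs (j + 1)), f t = 1 / (m : ℝ)) :
    ∀ a b : ℝ, 0 ≤ a → a ≤ b → b ≤ 1 →
      ((b - a) / (m : ℝ) ≤
        ∫ t in a..b, (1 / (m : ℝ)) * ∑ j ∈ Finset.range m,
          Set.indicator (Icc (xs j) (xs (j + 1)))
            (fun _ => 1 / (xs (j + 1) - xs j)) t) ∧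
      |(∫ t in a..b, (1 / (m : ℝ)) * ∑ j ∈ Finset.range m,
          Set.indicator (Icc (xs j) (xs (j + 1)))
            (fun _ => 1 / (xs (j + 1) - xs j)) t)
        - ∫ t in a..b, f t| ≤ 2 / (m : ℝ) :=
  evenedOut_density_props_general m hm f hf_int hf_nonneg xs hx0 hxm hmono hquant
end
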